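/- (Stacked Calderón–Zygmund lemma.) Let K₁ = (-1,1)ⁿ × (0,1] and let 𝒞 be the family of parabolic dyadic subcubes of K₁ obtained by repeatedly splitting each cube into 2^{n+2} congruent cubes (halving each spatial side and quartering the time length). For L ∈ 𝒞 with predecessor L̃ = J × (τ, τ + 4^{-(k-1)}], and m ∈ ℕ, let L̃^m := J × (τ + 4^{-k+1}, τ + 4^{-k+1}(m+1)] be the union of m time-translates of the predecessor in the future direction, and let 𝒞(m) := {L ∈ 𝒞 : L̃^m ⊂ (-10,10)ⁿ × (0,10]}. Suppose A ⊂ B ⊂ K₁ are measurable, σ ∈ (0,1), |A| ≤ σ|K₁|, and: whenever L ∈ 𝒞(m) satisfies |A ∩ L| > σ|L|, then L̃^m ⊂ B. Then |A| ≤ σ·(m+1)/m·|B|. -/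

import Mathlib

open MeasureTheory Set
open scoped ENNReal NNReal

def K1 (n : ℕ) : Set ((Fin n → ℝ) × ℝ) :=
  {p | (∀ i, p.1 i ∈ Set.Ioo (-1:ℝ) 1) ∧ p.2 ∈ Set.Ioc (0:ℝ) 1}

def bigQ (n : ℕ) : Set ((Fin n → ℝ) × ℝ) :=
  {p | (∀ i, p.1 i ∈ Set.Ioo (-10:ℝ) 10) ∧ p.2 ∈ Set.Ioc (0:ℝ) 10}

def dyadicCube (n k : ℕ) (a : Fin n → ℤ) (b : ℕ) : Set ((Fin n → ℝ) × ℝ) :=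
  {p | (∀ i, (a i : ℝ) * (2:ℝ) ^ (1 - (k:ℤ)) < p.1 i ∧
        p.1 i < ((a i : ℝ) + 1) * (2:ℝ) ^ (1 - (k:ℤ))) ∧
      (b : ℝ) * (4:ℝ) ^ (-(k:ℤ)) < p.2 ∧ p.2 ≤ ((b : ℝ) + 1) * (4:ℝ) ^ (-(k:ℤ))}

def validCube (n k : ℕ) (a : Fin n → ℤ) (b : ℕ) : Prop :=
  1 ≤ k ∧ (∀ i, -(2:ℤ) ^ (k - 1) ≤ a i ∧ a i < (2:ℤ) ^ (k - 1)) ∧ b < 4 ^ k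

def stacked (n m k : ℕ) (a : Fin n → ℤ) (b : ℕ) : Set ((Fin n → ℝ) × ℝ) :=
  if k ≤ 1 then
    {p | (∀ i, p.1 i ∈ Set.Ioo (-1:ℝ) 1) ∧ 1 < p.2 ∧ p.2 ≤ (m : ℝ) + 1}
  else
    {p | (∀ i, ((Int.fdiv (a i) 2 : ℤ) : ℝ) * (2:ℝ) ^ (1 - ((k:ℤ) - 1)) < p.1 i ∧
          p.1 i < (((Int.fdiv (a i) 2 : ℤ) : ℝ) + 1) * (2:ℝ) ^ (1 - ((k:ℤ) - 1))) ∧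
        ((b / 4 : ℕ) : ℝ) * (4:ℝ) ^ (-((k:ℤ) - 1)) + (4:ℝ) ^ (-((k:ℤ) - 1)) < p.2 ∧
        p.2 ≤ ((b / 4 : ℕ) : ℝ) * (4:ℝ) ^ (-((k:ℤ) - 1)) +
          ((m : ℝ) + 1) * (4:ℝ) ^ (-((k:ℤ) - 1))}

namespace SCZ

abbrev Par (n : ℕ) := ℕ × (Fin n → ℤ) × ℕ

variable {n : ℕ}

/-- side lengths -/
noncomputable def sLen (k : ℕ) : ℝ := (2:ℝ) ^ (1 - (k:ℤ))
noncomputable def tLen (k : ℕ) : ℝ := (4:ℝ) ^ (-(k:ℤ))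

lemma sLen_pos (k : ℕ) : 0 < sLen k := zpow_pos (by norm_num) _
lemma tLen_pos (k : ℕ) : 0 < tLen k := zpow_pos (by norm_num) _

def cube (n : ℕ) (q : Par n) : Set ((Fin n → ℝ) × ℝ) := dyadicCube n q.1 q.2.1 q.2.2

def pv (n : ℕ) (q : Par n) : Prop := validCube n q.1 q.2.1 q.2.2

def pred (q : Par n) : Par n := (q.1 - 1, fun i => Int.fdiv (q.2.1 i) 2, q.2.2 / 4)

lemma mem_cube {q : Par n} {p : (Fin n → ℝ) × ℝ} :
    p ∈ cube n q ↔ (∀ i, (q.2.1 i : ℝ) * sLen q.1 < p.1 i ∧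
      p.1 i < ((q.2.1 i : ℝ) + 1) * sLen q.1) ∧
      (q.2.2 : ℝ) * tLen q.1 < p.2 ∧ p.2 ≤ ((q.2.2 : ℝ) + 1) * tLen q.1 := Iff.rfl

lemma cube_eq_prod (q : Par n) :
    cube n q = (univ.pi fun i => Ioo ((q.2.1 i : ℝ) * sLen q.1) (((q.2.1 i : ℝ) + 1) * sLen q.1))
      ×ˢ Ioc ((q.2.2 : ℝ) * tLen q.1) (((q.2.2 : ℝ) + 1) * tLen q.1) := by
  ext p
  simp only [mem_cube, Set.mem_prod, Set.mem_pi, Set.mem_Ioo, Set.mem_Ioc, Set.mem_univ,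
    forall_true_left, true_implies]

lemma measurableSet_cube (q : Par n) : MeasurableSet (cube n q) := by
  rw [cube_eq_prod]
  exact (MeasurableSet.univ_pi fun i => measurableSet_Ioo).prod measurableSet_Ioc

lemma cube_nonempty (q : Par n) : (cube n q).Nonempty := by
  refine ⟨⟨fun i => (q.2.1 i : ℝ) * sLen q.1 + sLen q.1 / 2, ((q.2.2 : ℝ) + 1) * tLen q.1⟩, ?_⟩
  rw [mem_cube]
  have hs := sLen_pos q.1
  have ht := tLen_pos q.1
  refine ⟨fun i => ⟨by nlinarith, by nlinarith⟩, by nlinarith, le_refl _⟩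


lemma cast_pred_nat {k : ℕ} (hk : 1 ≤ k) : (((k-1 : ℕ)) : ℤ) = (k:ℤ) - 1 := by
  omega

lemma sLen_pred {k : ℕ} (hk : 1 ≤ k) : sLen (k-1) = 2 * sLen k := by
  unfold sLen
  rw [cast_pred_nat hk]
  rw [show (1 - ((k:ℤ) - 1)) = (1 - (k:ℤ)) + 1 by ring, zpow_add₀ (by norm_num : (2:ℝ) ≠ 0)]
  ring

lemma tLen_pred {k : ℕ} (hk : 1 ≤ k) : tLen (k-1) = 4 * tLen k := by
  unfold tLen
  rw [cast_pred_nat hk]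
  rw [show (-((k:ℤ) - 1)) = (-(k:ℤ)) + 1 by ring, zpow_add₀ (by norm_num : (4:ℝ) ≠ 0)]
  ring

lemma fdiv_two_bounds (a : ℤ) : 2 * Int.fdiv a 2 ≤ a ∧ a ≤ 2 * Int.fdiv a 2 + 1 := by
  rw [Int.fdiv_eq_ediv_of_nonneg _ (by norm_num)]
  have h1 := Int.mul_ediv_add_emod a 2
  have h2 := Int.emod_nonneg a (by norm_num : (2:ℤ) ≠ 0)
  have h3 := Int.emod_lt_of_pos a (by norm_num : (0:ℤ) < 2)
  omega

lemma div_four_bounds (b : ℕ) : 4 * (b / 4) ≤ b ∧ b ≤ 4 * (b / 4) + 3 := by omega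

lemma subset_pred {q : Par n} (hk : 1 ≤ q.1) : cube n q ⊆ cube n (pred q) := by
  rcases q with ⟨k, a, b⟩
  intro p hp
  rw [mem_cube] at hp ⊢
  dsimp only at hp ⊢
  obtain ⟨hsp, ht1, ht2⟩ := hp
  have hs := sLen_pos k
  have ht := tLen_pos k
  have hsl : sLen (k-1) = 2 * sLen k := sLen_pred hk
  have htl : tLen (k-1) = 4 * tLen k := tLen_pred hk
  refine ⟨fun i => ?_, ?_, ?_⟩
  · obtain ⟨h1, h2⟩ := hsp i
    obtain ⟨f1, f2⟩ := fdiv_two_bounds (a i)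
    have f1' : (2 * Int.fdiv (a i) 2 : ℝ) ≤ (a i : ℝ) := by exact_mod_cast f1
    have f2' : (a i : ℝ) ≤ 2 * Int.fdiv (a i) 2 + 1 := by exact_mod_cast f2
    constructor
    · show ((Int.fdiv (a i) 2 : ℤ) : ℝ) * sLen (k-1) < p.1 i
      rw [hsl]; nlinarith
    · show p.1 i < (((Int.fdiv (a i) 2 : ℤ) : ℝ) + 1) * sLen (k-1)
      rw [hsl]; nlinarith
  · obtain ⟨g1, g2⟩ := div_four_bounds b
    have g1' : (4:ℝ) * ((b / 4 : ℕ) : ℝ) ≤ (b : ℝ) := by exact_mod_cast g1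
    show ((b / 4 : ℕ) : ℝ) * tLen (k-1) < p.2
    rw [htl]
    nlinarith
  · obtain ⟨g1, g2⟩ := div_four_bounds b
    have g2' : (b : ℝ) ≤ 4 * ((b / 4 : ℕ) : ℝ) + 3 := by exact_mod_cast g2
    show p.2 ≤ (((b / 4 : ℕ) : ℝ) + 1) * tLen (k-1)
    rw [htl]
    nlinarith

lemma valid_pred {q : Par n} (hq : pv n q) (hk : 2 ≤ q.1) : pv n (pred q) := by
  rcases q with ⟨k, a, b⟩
  obtain ⟨-, ha, hb⟩ := hq
  dsimp only [pred] at *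
  refine ⟨by omega, fun i => ?_, ?_⟩
  · obtain ⟨h1, h2⟩ := ha i
    obtain ⟨f1, f2⟩ := fdiv_two_bounds (a i)
    have hpow : (2:ℤ) ^ (k - 1) = 2 * 2 ^ (k - 1 - 1) := by
      rw [← pow_succ']
      congr 1
      omega
    show -(2:ℤ) ^ (k - 1 - 1) ≤ Int.fdiv (a i) 2 ∧ Int.fdiv (a i) 2 < (2:ℤ) ^ (k - 1 - 1)
    omega
  · show b / 4 < 4 ^ (k - 1)
    have : (4:ℕ) ^ k = 4 ^ (k-1) * 4 := by
      rw [← pow_succ]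
      congr 1
      omega
    omega

lemma same_gen_eq {q r : Par n} {p : (Fin n → ℝ) × ℝ}
    (hq : p ∈ cube n q) (hr : p ∈ cube n r) (hg : q.1 = r.1) : q = r := by
  rcases q with ⟨k, a, b⟩; rcases r with ⟨k', a', b'⟩
  simp only at hg
  subst hg
  rw [mem_cube] at hq hr
  have hs := sLen_pos k
  have ht := tLen_pos k
  obtain ⟨hqs, hqt1, hqt2⟩ := hq
  obtain ⟨hrs, hrt1, hrt2⟩ := hr
  have ha : a = a' := by
    funext i
    obtain ⟨h1, h2⟩ := hqs i
    obtain ⟨h3, h4⟩ := hrs i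
    have e1 : (a i : ℝ) < (a' i : ℝ) + 1 := by nlinarith
    have e2 : (a' i : ℝ) < (a i : ℝ) + 1 := by nlinarith
    have e1' : a i < a' i + 1 := by exact_mod_cast e1
    have e2' : a' i < a i + 1 := by exact_mod_cast e2
    omega
  have hb : b = b' := by
    have e1 : (b : ℝ) < (b' : ℝ) + 1 := by nlinarith
    have e2 : (b' : ℝ) < (b : ℝ) + 1 := by nlinarith
    have e1' : b < b' + 1 := by exact_mod_cast e1
    have e2' : b' < b + 1 := by exact_mod_cast e2
    omega
  simp [ha, hb]

lemma predIter_fst (j : ℕ) (q : Par n) : (pred^[j] q).1 = q.1 - j := by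
  induction j generalizing q with
  | zero => simp
  | succ j ih =>
    rw [Function.iterate_succ_apply, ih]
    show q.1 - 1 - j = q.1 - (j+1)
    omega

lemma subset_predIter {q : Par n} {j : ℕ} (hj : j ≤ q.1 - 1) (hk : 1 ≤ q.1) :
    cube n q ⊆ cube n (pred^[j] q) := by
  induction j with
  | zero => simp
  | succ j ih =>
    rw [Function.iterate_succ_apply']
    refine (ih (by omega)).trans (subset_pred ?_)
    rw [predIter_fst]
    omega

lemma eq_predIter_of_mem {q r : Par n} {p : (Fin n → ℝ) × ℝ}
    (hq : p ∈ cube n q) (hr : p ∈ cube n r) (hg : r.1 ≤ q.1) (hr1 : 1 ≤ r.1) :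
    pred^[q.1 - r.1] q = r := by
  have key : ∀ d q', (q'.1 = r.1 + d) → p ∈ cube n q' → pred^[d] q' = r := by
    intro d
    induction d with
    | zero =>
      intro q' hg' hq'
      simpa using same_gen_eq hq' hr (by omega)
    | succ d ih =>
      intro q' hg' hq'
      rw [Function.iterate_succ_apply]
      refine ih (pred q') (by show q'.1 - 1 = _; omega) ?_
      exact subset_pred (by omega) hq'
  exact key (q.1 - r.1) q (by omega) hq

def Grid (n : ℕ) : Set ((Fin n → ℝ) × ℝ) :=
  {p | ∃ i : Fin n, ∃ k : ℕ, ∃ a : ℤ, p.1 i = (a : ℝ) * sLen k}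

lemma grid_null : volume (Grid n) = 0 := by
  have : Grid n = ⋃ i : Fin n, ⋃ k : ℕ, ⋃ a : ℤ,
      ({f : Fin n → ℝ | f i = (a : ℝ) * sLen k} ×ˢ (univ : Set ℝ)) := by
    ext p
    simp [Grid, Set.mem_prod]
  rw [this]
  refine measure_iUnion_null fun i => measure_iUnion_null fun k => measure_iUnion_null fun a => ?_
  rw [Measure.volume_eq_prod _ _, Measure.prod_prod]
  rw [show (volume : Measure (Fin n → ℝ)) = Measure.pi fun _ => volume from rfl]
  rw [Measure.pi_hyperplane]
  exact zero_mul _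

noncomputable def idxp (x : (Fin n → ℝ) × ℝ) (k : ℕ) : Par n :=
  (k, fun i => ⌊x.1 i / sLen k⌋, (⌈x.2 / tLen k⌉ - 1).toNat)

lemma idxp_fst (x : (Fin n → ℝ) × ℝ) (k : ℕ) : (idxp x k).1 = k := rfl

lemma idxp_spec {x : (Fin n → ℝ) × ℝ} (hx : x ∈ K1 n) (hg : x ∉ Grid n) (k : ℕ) (hk : 1 ≤ k) :
    x ∈ cube n (idxp x k) ∧ pv n (idxp x k) := by
  obtain ⟨hxs, hxt1, hxt2⟩ := hx
  have hs := sLen_pos k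
  have ht := tLen_pos k
  have hbnn : (1:ℤ) ≤ ⌈x.2 / tLen k⌉ := by
    rw [Int.le_ceil_iff]
    simp only [Int.cast_one, sub_self]
    positivity
  have hbcast : (((⌈x.2 / tLen k⌉ - 1).toNat : ℕ) : ℝ) = (⌈x.2 / tLen k⌉ : ℝ) - 1 := by
    have h : (((⌈x.2 / tLen k⌉ - 1).toNat : ℕ) : ℤ) = ⌈x.2 / tLen k⌉ - 1 :=
      Int.toNat_of_nonneg (by omega)
    have h2 := congrArg (fun z : ℤ => (z : ℝ)) h
    push_cast at h2
    linarith
  constructor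
  · rw [mem_cube]
    dsimp only [idxp]
    refine ⟨fun i => ?_, ?_, ?_⟩
    · have h1 : (⌊x.1 i / sLen k⌋ : ℝ) ≤ x.1 i / sLen k := Int.floor_le _
      have h2 : x.1 i / sLen k < ⌊x.1 i / sLen k⌋ + 1 := Int.lt_floor_add_one _
      have hne : (⌊x.1 i / sLen k⌋ : ℝ) ≠ x.1 i / sLen k := by
        intro h
        refine hg ⟨i, k, ⌊x.1 i / sLen k⌋, ?_⟩
        rw [h, div_mul_cancel₀ _ hs.ne']
      have h1' : (⌊x.1 i / sLen k⌋ : ℝ) < x.1 i / sLen k := lt_of_le_of_ne h1 hne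
      constructor
      · calc (⌊x.1 i / sLen k⌋ : ℝ) * sLen k < (x.1 i / sLen k) * sLen k := by
              exact mul_lt_mul_of_pos_right h1' hs
          _ = x.1 i := by field_simp
      · calc x.1 i = (x.1 i / sLen k) * sLen k := by field_simp
          _ < ((⌊x.1 i / sLen k⌋ : ℝ) + 1) * sLen k := by
              exact mul_lt_mul_of_pos_right h2 hs
    · have h2 : (⌈x.2 / tLen k⌉ : ℝ) < x.2 / tLen k + 1 := Int.ceil_lt_add_one _
      rw [hbcast]
      calc ((⌈x.2 / tLen k⌉ : ℝ) - 1) * tLen k < (x.2 / tLen k) * tLen k := by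
            exact mul_lt_mul_of_pos_right (by linarith) ht
        _ = x.2 := by field_simp
    · have h1 : x.2 / tLen k ≤ (⌈x.2 / tLen k⌉ : ℝ) := Int.le_ceil _
      rw [hbcast]
      calc x.2 = (x.2 / tLen k) * tLen k := by field_simp
        _ ≤ (⌈x.2 / tLen k⌉ : ℝ) * tLen k := by
            exact mul_le_mul_of_nonneg_right h1 ht.le
        _ = ((⌈x.2 / tLen k⌉ : ℝ) - 1 + 1) * tLen k := by ring
  · dsimp only [idxp, pv, validCube]
    refine ⟨hk, fun i => ?_, ?_⟩
    · have hps : ((2:ℝ)) ^ ((k:ℤ) - 1) * sLen k = 1 := by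
        unfold sLen
        rw [← zpow_add₀ (by norm_num : (2:ℝ) ≠ 0)]
        norm_num
      have hcast : (((2:ℤ) ^ (k - 1) : ℤ) : ℝ) = (2:ℝ) ^ ((k:ℤ) - 1) := by
        push_cast
        rw [← zpow_natCast]
        congr 1
        omega
      obtain ⟨hl, hr⟩ := hxs i
      constructor
      · rw [Int.le_floor]
        rw [show ((-(2:ℤ) ^ (k - 1) : ℤ) : ℝ) = -((2:ℝ) ^ ((k:ℤ) - 1)) by
          rw [Int.cast_neg, hcast]]
        rw [le_div_iff₀ hs]
        nlinarith
      · rw [Int.floor_lt]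
        rw [hcast]
        rw [div_lt_iff₀ hs]
        nlinarith
    · show (⌈x.2 / tLen k⌉ - 1).toNat < 4 ^ k
      have hpt : ((4:ℝ)) ^ (k:ℤ) * tLen k = 1 := by
        unfold tLen
        rw [← zpow_add₀ (by norm_num : (4:ℝ) ≠ 0)]
        norm_num
      have hce : ⌈x.2 / tLen k⌉ ≤ (4:ℤ) ^ k := by
        rw [Int.ceil_le]
        push_cast
        rw [← zpow_natCast (4:ℝ) k]
        rw [div_le_iff₀ ht]
        nlinarith
      have : ((4:ℤ))^k = ((4^k : ℕ) : ℤ) := by push_cast; ring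
      omega

lemma volume_K1_lt_top : volume (K1 n) < ⊤ := by
  have : K1 n = (univ.pi fun _ : Fin n => Ioo (-1:ℝ) 1) ×ˢ Ioc (0:ℝ) 1 := by
    ext p
    simp [K1, Set.mem_prod, Set.mem_pi]
  rw [this, Measure.volume_eq_prod _ _, Measure.prod_prod, volume_pi_pi]
  simp only [Real.volume_Ioo, Real.volume_Ioc]
  refine ENNReal.mul_lt_top ?_ ?_
  · exact ENNReal.prod_lt_top fun i _ => ENNReal.ofReal_lt_top
  · exact ENNReal.ofReal_lt_top

lemma prod_smul_right (μ : Measure (Fin n → ℝ)) [SigmaFinite μ] (ν : Measure ℝ) [SigmaFinite ν]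
    (c : ℝ≥0∞) (hc : c ≠ ⊤) : μ.prod (c • ν) = c • (μ.prod ν) := by
  ext s hs
  rw [Measure.prod_apply hs, Measure.smul_apply, Measure.prod_apply hs]
  simp only [Measure.smul_apply, smul_eq_mul]
  rw [← lintegral_const_mul' c _ hc]

lemma Ioc_disj {a b a' b' : ℝ} (hab : a < b) (hab' : a' < b')
    (h : Ioc a b ∩ Ioc a' b' = ∅) : b ≤ a' ∨ b' ≤ a := by
  by_contra hcon
  push_neg at hcon
  obtain ⟨h1, h2⟩ := hcon
  have : min b b' ∈ Ioc a b ∩ Ioc a' b' := by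
    constructor
    · exact ⟨lt_min hab h2, min_le_left _ _⟩
    · exact ⟨lt_min h1 hab', min_le_right _ _⟩
  rw [h] at this
  exact this

lemma stacking {ι : Type} [Countable ι] {m : ℕ} (hm : 1 ≤ m)
    (V : ι → Set (Fin n → ℝ)) (hV : ∀ r, MeasurableSet (V r))
    (τ ℓ : ι → ℝ) (hℓ : ∀ r, 0 < ℓ r)
    (hdisj : Pairwise fun r s =>
      (V r ×ˢ Ioc (τ r) (τ r + ℓ r)) ∩ (V s ×ˢ Ioc (τ s) (τ s + ℓ s)) = ∅)
    {B : Set ((Fin n → ℝ) × ℝ)}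
    (hstack : ∀ r, V r ×ˢ Ioc (τ r + ℓ r) (τ r + ℓ r + m * ℓ r) ⊆ B) :
    ∑' r, volume (V r ×ˢ Ioc (τ r) (τ r + ℓ r)) ≤ (1 + ((m:ℝ≥0∞))⁻¹) * volume B := by
  have hm0 : (0:ℝ) < m := by exact_mod_cast hm
  set C : ι → Set ((Fin n → ℝ) × ℝ) := fun r => V r ×ˢ Ioc (τ r) (τ r + ℓ r) with hC
  set S : ι → Set ((Fin n → ℝ) × ℝ) := fun r => V r ×ˢ Ioc (τ r + ℓ r) (τ r + ℓ r + m * ℓ r)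
    with hS
  set F : Set ((Fin n → ℝ) × ℝ) := ⋃ r, S r with hF
  have hSm : ∀ r, MeasurableSet (S r) := fun r => (hV r).prod measurableSet_Ioc
  have hCm : ∀ r, MeasurableSet (C r) := fun r => (hV r).prod measurableSet_Ioc
  have hFm : MeasurableSet F := MeasurableSet.iUnion hSm
  have hFB : F ⊆ B := iUnion_subset hstack
  set φ : ι → ℝ → ℝ := fun r y => ((m:ℝ))⁻¹ * y + (τ r - (τ r + ℓ r) / m) with hφ
  have hφmeas : ∀ r, Measurable (φ r) := fun r => (measurable_const_mul _).add_const _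
  set Ψ : ι → ((Fin n → ℝ) × ℝ) → ((Fin n → ℝ) × ℝ) := fun r p => (p.1, φ r p.2) with hΨ
  have hΨmeas : ∀ r, Measurable (Ψ r) := fun r => measurable_fst.prodMk ((hφmeas r).comp measurable_snd)
  -- the escaping part of the stack
  set D : ι → Set ((Fin n → ℝ) × ℝ) := fun r => (Ψ r) ⁻¹' (C r \ F) with hD
  have hφkey : ∀ r y, φ r y = τ r + (y - (τ r + ℓ r)) / m := by
    intro r y
    simp only [hφ]
    field_simp
    ring
  have hφIoc : ∀ r y, (φ r y ∈ Ioc (τ r) (τ r + ℓ r) ↔ y ∈ Ioc (τ r + ℓ r) (τ r + ℓ r + m * ℓ r)) := by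
    intro r y
    rw [hφkey, mem_Ioc, mem_Ioc]
    rw [show (τ r < τ r + (y - (τ r + ℓ r)) / m) ↔ (0 < (y - (τ r + ℓ r)) / m) from
      ⟨fun h => by linarith, fun h => by linarith⟩]
    rw [lt_div_iff₀ hm0, zero_mul]
    rw [show (τ r + (y - (τ r + ℓ r)) / m ≤ τ r + ℓ r) ↔ ((y - (τ r + ℓ r)) / m ≤ ℓ r) from
      ⟨fun h => by linarith, fun h => by linarith⟩]
    rw [div_le_iff₀ hm0]
    constructor
    · rintro ⟨h1, h2⟩
      exact ⟨by linarith, by nlinarith⟩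
    · rintro ⟨h1, h2⟩
      exact ⟨by linarith, by nlinarith⟩
  have hDS : ∀ r, D r ⊆ S r := by
    intro r p hp
    obtain ⟨hpC, -⟩ := hp
    obtain ⟨h1, h2⟩ := hpC
    exact ⟨h1, (hφIoc r p.2).mp h2⟩
  have hDF : ∀ r, D r ⊆ F := fun r => (hDS r).trans (subset_iUnion S r)
  -- measure identity : volume (D r) = m * volume (C r \ F)
  have hmap : ∀ r, Measure.map (Ψ r) volume = ((m:ℝ≥0∞)) • (volume : Measure ((Fin n → ℝ) × ℝ)) := by
    intro r
    have h1 : Measure.map (φ r) (volume : Measure ℝ) = ((m:ℝ≥0∞)) • volume := by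
      have hcomp : φ r = (fun y => y + (τ r - (τ r + ℓ r) / m)) ∘ (fun y => ((m:ℝ))⁻¹ * y) := by
        funext y; simp [hφ]
      rw [hcomp, ← Measure.map_map (measurable_add_const _) (measurable_const_mul _)]
      rw [Real.map_volume_mul_left (by positivity : ((m:ℝ))⁻¹ ≠ 0)]
      rw [Measure.map_smul, map_add_right_eq_self]
      congr 1
      rw [inv_inv, abs_of_pos hm0]
      exact (ENNReal.ofReal_natCast m)
    have h2 : (volume : Measure ((Fin n → ℝ) × ℝ)) = (volume : Measure (Fin n → ℝ)).prod volume :=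
      rfl
    rw [h2]
    have h3 : Ψ r = Prod.map id (φ r) := rfl
    rw [h3, ← Measure.map_prod_map _ _ measurable_id (hφmeas r), Measure.map_id, h1]
    exact prod_smul_right _ _ _ (by simp)
  have hDvol : ∀ r, volume (D r) = (m:ℝ≥0∞) * volume (C r \ F) := by
    intro r
    have : volume (D r) = (Measure.map (Ψ r) volume) (C r \ F) := by
      rw [Measure.map_apply (hΨmeas r) ((hCm r).diff hFm)]
    rw [this, hmap r]
    simp [Measure.smul_apply]
  -- pairwise disjointness of the D r
  have hDdisj : Pairwise (Function.onFun Disjoint D) := by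
    have key : ∀ r s, r ≠ s → τ r + ℓ r ≤ τ s → ∀ p, p ∈ D r → p ∈ D s → False := by
      intro r s hrs hts p hpr hps
      obtain ⟨⟨hv_s, hy_s⟩, hnF_s⟩ := hps
      obtain ⟨⟨hv_r, hy_r⟩, hnF_r⟩ := hpr
      -- hv : Ψ _ p ∈ C _, i.e. p.1 ∈ V _ and φ _ p.2 ∈ Ioc
      have hyS_r : p.2 ∈ Ioc (τ r + ℓ r) (τ r + ℓ r + m * ℓ r) := (hφIoc r p.2).mp hy_r
      have hyS_s : p.2 ∈ Ioc (τ s + ℓ s) (τ s + ℓ s + m * ℓ s) := (hφIoc s p.2).mp hy_s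
      -- x := φ s p.2 lands in the stack of r
      have hx1 : τ s < φ s p.2 ∧ φ s p.2 ≤ τ s + ℓ s := hy_s
      have hx2 : φ s p.2 < p.2 := by
        have h1 : τ s + ℓ s < p.2 := hyS_s.1
        have h2 : (p.2 - (τ s + ℓ s)) / m ≤ p.2 - (τ s + ℓ s) :=
          div_le_self (by linarith) (by exact_mod_cast hm)
        rw [hφkey]
        have := hℓ s
        linarith
      have hxStack : (p.1, φ s p.2) ∈ S r := by
        refine ⟨hv_r, ?_, ?_⟩
        · exact lt_of_le_of_lt ‹τ r + ℓ r ≤ τ s› hx1.1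
        · exact le_of_lt (lt_of_lt_of_le hx2 hyS_r.2)
      exact hnF_s (mem_iUnion.mpr ⟨r, hxStack⟩)
    intro r s hrs
    rw [Function.onFun, Set.disjoint_iff_inter_eq_empty]
    by_contra hne
    obtain ⟨p, hpr, hps⟩ := nonempty_iff_ne_empty.mpr hne
    -- the base cubes have disjoint time intervals over a common spatial point
    have hv_r : p.1 ∈ V r := ((hDS r) hpr).1
    have hv_s : p.1 ∈ V s := ((hDS s) hps).1
    have htimes : Ioc (τ r) (τ r + ℓ r) ∩ Ioc (τ s) (τ s + ℓ s) = ∅ := by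
      rw [eq_empty_iff_forall_notMem]
      intro t ht
      have : (p.1, t) ∈ C r ∩ C s := ⟨⟨hv_r, ht.1⟩, ⟨hv_s, ht.2⟩⟩
      rw [hdisj hrs] at this
      exact this
    rcases Ioc_disj (by linarith [hℓ r]) (by linarith [hℓ s]) htimes with h | h
    · exact key r s hrs h p hpr hps
    · exact key s r hrs.symm h p hps hpr
  -- summation
  have hsplit : ∀ r, volume (C r) = volume (C r ∩ F) + volume (C r \ F) :=
    fun r => (measure_inter_add_diff _ hFm).symm
  calc ∑' r, volume (C r) = ∑' r, (volume (C r ∩ F) + volume (C r \ F)) := by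
        exact tsum_congr hsplit
    _ = (∑' r, volume (C r ∩ F)) + ∑' r, volume (C r \ F) := ENNReal.tsum_add
    _ ≤ volume F + (m:ℝ≥0∞)⁻¹ * volume F := by
        gcongr
        · rw [← measure_iUnion ?_ (fun r => (hCm r).inter hFm)]
          · exact measure_mono (iUnion_subset fun r => inter_subset_right)
          · intro r s hrs
            have h := hdisj hrs
            rw [Function.onFun, Set.disjoint_iff_inter_eq_empty, eq_empty_iff_forall_notMem]
            intro p hp
            have hmem : p ∈ C r ∩ C s := ⟨hp.1.1, hp.2.1⟩
            rw [h] at hmem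
            exact hmem
        · have : ∀ r, volume (C r \ F) = (m:ℝ≥0∞)⁻¹ * volume (D r) := by
            intro r
            rw [hDvol r, ← mul_assoc, ENNReal.inv_mul_cancel (by exact_mod_cast (Nat.cast_ne_zero (R := ENNReal)).mpr (by omega)) (by simp), one_mul]
          rw [tsum_congr this, ENNReal.tsum_mul_left]
          gcongr
          rw [← measure_iUnion hDdisj (fun r => ((hCm r).diff hFm).preimage (hΨmeas r))]
          exact measure_mono (iUnion_subset hDF)
    _ = (1 + (m:ℝ≥0∞)⁻¹) * volume F := by ring
    _ ≤ (1 + (m:ℝ≥0∞)⁻¹) * volume B := mul_le_mul_right (measure_mono hFB) _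

lemma two_pow_sLen (k : ℕ) : (2:ℝ) ^ ((k:ℤ) - 1) * sLen k = 1 := by
  unfold sLen
  rw [← zpow_add₀ (by norm_num : (2:ℝ) ≠ 0)]
  norm_num

lemma four_pow_tLen (k : ℕ) : (4:ℝ) ^ ((k:ℤ)) * tLen k = 1 := by
  unfold tLen
  rw [← zpow_add₀ (by norm_num : (4:ℝ) ≠ 0)]
  norm_num

lemma cast2pow {k : ℕ} (hk : 1 ≤ k) : (((2:ℤ) ^ (k - 1) : ℤ) : ℝ) = (2:ℝ) ^ ((k:ℤ) - 1) := by
  push_cast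
  rw [← zpow_natCast]
  congr 1
  omega

lemma cast4pow (k : ℕ) : (((4:ℕ) ^ k : ℕ) : ℝ) = (4:ℝ) ^ ((k:ℤ)) := by
  push_cast
  rw [← zpow_natCast]

lemma tLen_le_sLen (k : ℕ) : tLen k ≤ sLen k := by
  unfold tLen sLen
  have h4 : (4:ℝ) = 2 ^ (2:ℤ) := by norm_num
  rw [h4, ← zpow_mul]
  apply zpow_le_zpow_right₀ (by norm_num : (1:ℝ) ≤ 2)
  omega

lemma sLen_le_one {k : ℕ} (hk : 1 ≤ k) : sLen k ≤ 1 := by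
  unfold sLen
  calc (2:ℝ) ^ (1 - (k:ℤ)) ≤ 2 ^ (0:ℤ) :=
        zpow_le_zpow_right₀ (by norm_num : (1:ℝ) ≤ 2) (by omega)
    _ = 1 := zpow_zero 2

variable {m : ℕ}

/-- the stack written as a product set, in terms of the predecessor's parameters. -/
lemma stacked_eq_prod {q : Par n} (hk : 2 ≤ q.1) :
    stacked n m q.1 q.2.1 q.2.2 =
      (univ.pi fun i => Ioo (((pred q).2.1 i : ℝ) * sLen (pred q).1)
          ((((pred q).2.1 i : ℝ) + 1) * sLen (pred q).1)) ×ˢ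
        Ioc (((pred q).2.2 : ℝ) * tLen (pred q).1 + tLen (pred q).1)
          (((pred q).2.2 : ℝ) * tLen (pred q).1 + tLen (pred q).1 + m * tLen (pred q).1) := by
  rcases q with ⟨k, a, b⟩
  simp only at hk
  have he1 : (4:ℝ) ^ (-((k:ℤ) - 1)) = tLen (k - 1) := by
    unfold tLen
    rw [cast_pred_nat (by omega)]
  have he2 : (2:ℝ) ^ (1 - ((k:ℤ) - 1)) = sLen (k - 1) := by
    unfold sLen
    rw [cast_pred_nat (by omega)]
  unfold stacked
  rw [if_neg (by omega)]
  ext p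
  simp only [mem_setOf_eq, mem_prod, mem_pi, mem_univ, true_implies, mem_Ioo, mem_Ioc, pred,
    he1, he2]
  constructor
  · rintro ⟨h1, h2, h3⟩
    exact ⟨fun i => h1 i, by linarith, by linarith⟩
  · rintro ⟨h1, h2, h3⟩
    exact ⟨fun i => h1 i, by linarith, by linarith⟩

lemma m_tLen_le_nine {k : ℕ} (hk : 1 ≤ k) (h : m ≤ 9 * 4 ^ (k - 1)) :
    (m : ℝ) * tLen (k - 1) ≤ 9 := by
  have hcast : ((m:ℝ)) ≤ 9 * (4:ℝ) ^ (((k-1:ℕ)):ℤ) := by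
    calc ((m:ℝ)) ≤ ((9 * 4 ^ (k-1) : ℕ) : ℝ) := by exact_mod_cast h
      _ = 9 * (4:ℝ) ^ (((k-1:ℕ)):ℤ) := by
          push_cast
          rw [← zpow_natCast]
  have ht := tLen_pos (k-1)
  have hmul := four_pow_tLen (k-1)
  nlinarith

/-- membership bounds of the spatial part of a predecessor cube, for a valid cube. -/
lemma pred_spatial_bounds {q : Par n} (hq : pv n q) (hk : 2 ≤ q.1) (i : Fin n) :
    (-1:ℝ) ≤ ((pred q).2.1 i : ℝ) * sLen (pred q).1 ∧
      (((pred q).2.1 i : ℝ) + 1) * sLen (pred q).1 ≤ 1 := by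
  have hv := valid_pred hq hk
  obtain ⟨hk1, ha, -⟩ := hv
  obtain ⟨h1, h2⟩ := ha i
  have hs := sLen_pos (pred q).1
  have hps := two_pow_sLen (pred q).1
  have hc := cast2pow hk1
  have h1' : -((2:ℝ) ^ (((pred q).1:ℤ) - 1)) ≤ ((pred q).2.1 i : ℝ) := by
    rw [← hc]
    exact_mod_cast h1
  have h2' : ((pred q).2.1 i : ℝ) + 1 ≤ (2:ℝ) ^ (((pred q).1:ℤ) - 1) := by
    rw [← hc]
    have : ((pred q).2.1 i : ℝ) < ((2:ℤ) ^ ((pred q).1 - 1) : ℤ) := by exact_mod_cast h2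
    have h3 : ((pred q).2.1 i : ℝ) + 1 ≤ ((2:ℤ) ^ ((pred q).1 - 1) : ℤ) := by
      have : (pred q).2.1 i + 1 ≤ (2:ℤ) ^ ((pred q).1 - 1) := by
        have := h2
        omega
      exact_mod_cast this
    exact h3
  constructor
  · nlinarith
  · nlinarith

/-- time top bound of the stack, for a valid cube. -/
lemma stack_top_le {q : Par n} (hq : pv n q) (hk : 2 ≤ q.1) :
    ((pred q).2.2 : ℝ) * tLen (pred q).1 + tLen (pred q).1 + m * tLen (pred q).1 ≤
      1 + (m:ℝ) * tLen (pred q).1 := by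
  have hv := valid_pred hq hk
  obtain ⟨hk1, -, hb⟩ := hv
  have ht := tLen_pos (pred q).1
  have hpt := four_pow_tLen (pred q).1
  have hb' : ((pred q).2.2 : ℝ) + 1 ≤ (4:ℝ) ^ (((pred q).1:ℤ)) := by
    rw [← cast4pow]
    exact_mod_cast Nat.succ_le_of_lt hb
  nlinarith

/-- L1 : the stack of a valid cube is inside `bigQ` when `m ≤ 9·4^{k-1}`. -/
lemma stacked_subset_bigQ {q : Par n} (hq : pv n q) (h9 : m ≤ 9 * 4 ^ (q.1 - 1)) :
    stacked n m q.1 q.2.1 q.2.2 ⊆ bigQ n := by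
  rcases Nat.lt_or_ge q.1 2 with hk | hk
  · -- k = 1
    have hk1 : q.1 = 1 := by
      obtain ⟨h1, -, -⟩ := hq
      omega
    unfold stacked
    rw [if_pos (by omega)]
    intro p hp
    obtain ⟨h1, h2, h3⟩ := hp
    have hm9 : (m:ℝ) ≤ 9 := by
      have : m ≤ 9 := by
        have := h9
        rw [hk1] at this
        simpa using this
      exact_mod_cast this
    refine ⟨fun i => ?_, by linarith, by linarith⟩
    obtain ⟨ha, hb⟩ := h1 i
    exact ⟨by linarith, by linarith⟩
  · -- k ≥ 2
    rw [stacked_eq_prod hk]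
    intro p hp
    obtain ⟨hps, hpt1, hpt2⟩ := hp
    have ht := tLen_pos (pred q).1
    have hb0 : (0:ℝ) ≤ ((pred q).2.2 : ℝ) := by positivity
    have h9' : (m : ℝ) * tLen (pred q).1 ≤ 9 := by
      have : (pred q).1 = q.1 - 1 := rfl
      rw [this]
      exact m_tLen_le_nine (by omega) h9
    have htop := stack_top_le (m := m) hq hk
    refine ⟨fun i => ?_, ?_, ?_⟩
    · have hsb := pred_spatial_bounds hq hk i
      have := hps i (mem_univ i)
      rw [mem_Ioo] at this
      exact ⟨by linarith [this.1, hsb.1], by linarith [this.2, hsb.2]⟩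
    · show (0:ℝ) < p.2
      have := hpt1
      nlinarith
    · show p.2 ≤ 10
      linarith

/-- L2 : the stack of a valid cube contains a point with time-coordinate `> 1`,
provided `(m+1) · tLen (k-1) > 1` (or `k = 1`). -/
lemma stacked_high_point {q : Par n} (hq : pv n q) (hm : 1 ≤ m)
    (htall : q.1 = 1 ∨ (2 ≤ q.1 ∧ 1 < ((m:ℝ) + 1) * tLen (q.1 - 1))) :
    ∃ p ∈ stacked n m q.1 q.2.1 q.2.2, 1 < p.2 := by
  rcases htall with hk1 | ⟨hk, htall⟩
  · refine ⟨⟨fun _ => 0, (m:ℝ) + 1⟩, ?_, ?_⟩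
    · unfold stacked
      rw [if_pos (by omega)]
      refine ⟨fun i => by norm_num, ?_, le_refl _⟩
      have : (1:ℝ) ≤ (m:ℝ) := by exact_mod_cast hm
      dsimp only
      linarith
    · show (1:ℝ) < (m:ℝ) + 1
      have : (1:ℝ) ≤ (m:ℝ) := by exact_mod_cast hm
      linarith
  · rw [stacked_eq_prod hk]
    have hs := sLen_pos (pred q).1
    have ht := tLen_pos (pred q).1
    have hb0 : (0:ℝ) ≤ ((pred q).2.2 : ℝ) := by positivity
    refine ⟨⟨fun i => ((pred q).2.1 i : ℝ) * sLen (pred q).1 + sLen (pred q).1 / 2,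
      ((pred q).2.2 : ℝ) * tLen (pred q).1 + tLen (pred q).1 + m * tLen (pred q).1⟩, ?_, ?_⟩
    · refine ⟨fun i _ => ?_, ?_, le_refl _⟩
      · rw [mem_Ioo]
        constructor <;> nlinarith
      · dsimp only
        have hm' : (1:ℝ) ≤ (m:ℝ) := by exact_mod_cast hm
        nlinarith
    · show 1 < ((pred q).2.2 : ℝ) * tLen (pred q).1 + tLen (pred q).1 + m * tLen (pred q).1
      have hpred : (pred q).1 = q.1 - 1 := rfl
      rw [hpred] at ht ⊢
      nlinarith

lemma cube_eq_prod' (q : Par n) :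
    cube n q = (univ.pi fun i => Ioo ((q.2.1 i : ℝ) * sLen q.1) (((q.2.1 i : ℝ) + 1) * sLen q.1))
      ×ˢ Ioc ((q.2.2 : ℝ) * tLen q.1) ((q.2.2 : ℝ) * tLen q.1 + tLen q.1) := by
  rw [cube_eq_prod]
  congr 1
  rw [add_one_mul]

lemma cube_small {x : (Fin n → ℝ) × ℝ} (hx : x ∈ K1 n) (hg : x ∉ Grid n)
    {U : Set ((Fin n → ℝ) × ℝ)} (hU : IsOpen U) (hxU : x ∈ U) (k₀ : ℕ) (hk₀ : 1 ≤ k₀) :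
    ∃ k, k₀ ≤ k ∧ cube n (idxp x k) ⊆ U := by
  obtain ⟨ε, hε, hball⟩ := Metric.isOpen_iff.mp hU x hxU
  obtain ⟨j, hj⟩ := exists_pow_lt_of_lt_one hε (by norm_num : (1/2:ℝ) < 1)
  set k := max k₀ (j + 1) with hk
  have hk1 : 1 ≤ k := le_trans hk₀ (le_max_left _ _)
  have hsk : sLen k < ε := by
    have h1 : sLen k ≤ (1/2:ℝ) ^ j := by
      unfold sLen
      have : ((1:ℝ)/2) ^ j = (2:ℝ) ^ (-(j:ℤ)) := by
        rw [one_div, inv_pow, ← zpow_natCast, ← zpow_neg]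
      rw [this]
      apply zpow_le_zpow_right₀ (by norm_num : (1:ℝ) ≤ 2)
      have : j + 1 ≤ k := le_max_right _ _
      omega
    linarith
  refine ⟨k, le_max_left _ _, ?_⟩
  intro p hp
  apply hball
  rw [Metric.mem_ball]
  have hxc : x ∈ cube n (idxp x k) := (idxp_spec hx hg k hk1).1
  rw [mem_cube] at hp hxc
  simp only [idxp_fst] at hp hxc
  rw [Prod.dist_eq]
  apply max_lt
  · rcases Nat.eq_zero_or_pos n with hn | hn
    · subst hn
      simpa [dist_pi_lt_iff hε] using (fun i : Fin 0 => i.elim0)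
    · rw [dist_pi_lt_iff hε]
      intro i
      rw [Real.dist_eq, abs_sub_lt_iff]
      obtain ⟨h1, h2⟩ := hp.1 i
      obtain ⟨h3, h4⟩ := hxc.1 i
      have := sLen_pos k
      constructor <;> nlinarith
  · rw [Real.dist_eq, abs_sub_lt_iff]
    obtain ⟨h1, h2⟩ := hp.2
    obtain ⟨h3, h4⟩ := hxc.2
    have h5 := tLen_le_sLen k
    have := tLen_pos k
    constructor <;> nlinarith
end SCZ

/-- Stacked Calderón–Zygmund lemma: if `A ⊆ B ⊆ K₁`, `|A| ≤ σ |K₁|`, and every dyadic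
cube `L` with `L̃^m ⊆ Q` and `|A ∩ L| > σ |L|` satisfies `L̃^m ⊆ B`, then
`|A| ≤ σ (m+1)/m |B|`. -/
theorem stmt17 (n m : ℕ) (hm : 1 ≤ m) (A B : Set ((Fin n → ℝ) × ℝ))
    (hAm : MeasurableSet A) (hBm : MeasurableSet B)
    (hAB : A ⊆ B) (hBK : B ⊆ K1 n) (σ : ℝ) (hσ : σ ∈ Set.Ioo (0:ℝ) 1)
    (hA : volume A ≤ ENNReal.ofReal σ * volume (K1 n))
    (hCZ : ∀ (k : ℕ) (a : Fin n → ℤ) (b : ℕ), validCube n k a b →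
        stacked n m k a b ⊆ bigQ n →
        ENNReal.ofReal σ * volume (dyadicCube n k a b) < volume (A ∩ dyadicCube n k a b) →
        stacked n m k a b ⊆ B) :
    volume A ≤ ENNReal.ofReal (σ * ((m : ℝ) + 1) / m) * volume B := by
  classical
  obtain ⟨hσ0, hσ1⟩ := hσ
  have hAK : A ⊆ K1 n := hAB.trans hBK
  -- choose the threshold generation k₀
  have hex : ∃ k, 1 ≤ k ∧ m ≤ 9 * 4 ^ (k - 1) := by
    refine ⟨m + 1, by omega, ?_⟩
    have h1 : m < 2 ^ m := Nat.lt_two_pow_self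
    have h2 : (2:ℕ) ^ m ≤ 4 ^ m := Nat.pow_le_pow_left (by norm_num) m
    have h3 : (m+1) - 1 = m := by omega
    rw [h3]
    omega
  set k₀ := Nat.find hex with hk₀def
  obtain ⟨hk₀1, hk₀m⟩ := Nat.find_spec hex
  rw [← hk₀def] at hk₀1 hk₀m
  have hk₀min : k₀ = 1 ∨ (2 ≤ k₀ ∧ 9 * 4 ^ (k₀ - 2) < m) := by
    rcases Nat.eq_or_lt_of_le hk₀1 with h | h
    · left; omega
    · right
      refine ⟨by omega, ?_⟩
      have hmin := Nat.find_min hex (m := k₀ - 1) (by omega)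
      push_neg at hmin
      have h2 := hmin (by omega)
      rw [Nat.sub_sub] at h2
      norm_num at h2
      omega
  set Hi : SCZ.Par n → Prop :=
    fun q => ENNReal.ofReal σ * volume (SCZ.cube n q) < volume (A ∩ SCZ.cube n q) with hHidef
  have hCZ' : ∀ q : SCZ.Par n, SCZ.pv n q → stacked n m q.1 q.2.1 q.2.2 ⊆ bigQ n → Hi q →
      stacked n m q.1 q.2.1 q.2.2 ⊆ B := fun q hq h1 h2 => hCZ q.1 q.2.1 q.2.2 hq h1 h2
  -- Step 2: all valid cubes of generation k₀ have low density
  have step2 : ∀ q : SCZ.Par n, SCZ.pv n q → q.1 = k₀ → ¬ Hi q := by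
    intro q hq hgen hH
    have h9 : m ≤ 9 * 4 ^ (q.1 - 1) := by rw [hgen]; exact hk₀m
    have hB := hCZ' q hq (SCZ.stacked_subset_bigQ hq h9) hH
    have htall : q.1 = 1 ∨ (2 ≤ q.1 ∧ 1 < ((m:ℝ)+1) * SCZ.tLen (q.1-1)) := by
      have hq1 : 1 ≤ q.1 := by omega
      rcases Nat.eq_or_lt_of_le hq1 with h | h
      · left; omega
      · right
        refine ⟨by omega, ?_⟩
        have hmin : 9 * 4 ^ (q.1 - 2) < m := by
          rcases hk₀min with h1 | ⟨h1, h2⟩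
          · omega
          · rw [hgen]
            exact h2
        have hm' : (9 * (4:ℝ) ^ ((q.1-2:ℕ)) + 1) ≤ (m:ℝ) := by
          have : ((9 * 4 ^ (q.1-2) + 1 : ℕ) : ℝ) ≤ (m:ℝ) := by exact_mod_cast hmin
          push_cast at this
          linarith
        have he : ((4:ℝ) ^ ((q.1-2:ℕ))) * SCZ.tLen (q.1 - 1) = 4⁻¹ := by
          unfold SCZ.tLen
          rw [SCZ.cast_pred_nat (by omega : 1 ≤ q.1)]
          rw [← zpow_natCast (4:ℝ) (q.1-2)]
          rw [← zpow_add₀ (by norm_num : (4:ℝ) ≠ 0)]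
          rw [show ((q.1-2:ℕ):ℤ) + -((q.1:ℤ)-1) = -1 by omega]
          norm_num
        have ht := SCZ.tLen_pos (q.1 - 1)
        nlinarith [mul_le_mul_of_nonneg_right hm' ht.le]
    obtain ⟨p, hps, hp2⟩ := SCZ.stacked_high_point hq hm htall
    have hpK : p ∈ K1 n := hBK (hB hps)
    have := hpK.2.2
    linarith
  -- the Calderón-Zygmund selection
  set Sel : Set (SCZ.Par n) := {q | SCZ.pv n q ∧ k₀ < q.1 ∧ Hi q ∧
      ∀ j, 1 ≤ j → k₀ ≤ q.1 - j → ¬ Hi (SCZ.pred^[j] q)} with hSeldef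
  set G : Set ((Fin n → ℝ) × ℝ) := ⋃ q ∈ Sel, SCZ.cube n q with hGdef
  have hGm : MeasurableSet G :=
    MeasurableSet.biUnion (Set.to_countable _) (fun q _ => SCZ.measurableSet_cube q)
  set Fs : Set ((Fin n → ℝ) × ℝ) := A \ G with hFsdef
  have hFsm : MeasurableSet Fs := hAm.diff hGm
  have hFsA : Fs ⊆ A := diff_subset
  -- every off-grid point of Fs sees only low-density cubes of generation ≥ k₀
  have hFlow : ∀ x ∈ Fs, x ∉ SCZ.Grid n → ∀ k, k₀ ≤ k → ¬ Hi (SCZ.idxp x k) := by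
    intro x hxF hg k hk hH
    have hxK : x ∈ K1 n := hAK (hFsA hxF)
    have hne : ∃ k', k₀ ≤ k' ∧ Hi (SCZ.idxp x k') := ⟨k, hk, hH⟩
    set k' := Nat.find hne with hk'def
    obtain ⟨hk'1, hk'H⟩ := Nat.find_spec hne
    rcases Nat.eq_or_lt_of_le hk'1 with heq | hlt
    · exact step2 _ (SCZ.idxp_spec hxK hg k' (by omega)).2
        (by rw [SCZ.idxp_fst]; omega) hk'H
    · have hq := SCZ.idxp_spec hxK hg k' (by omega)
      have hmem : SCZ.idxp x k' ∈ Sel := by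
        refine ⟨hq.2, by rw [SCZ.idxp_fst]; omega, hk'H, ?_⟩
        intro j hj hkj
        rw [SCZ.idxp_fst] at hkj
        have hidx : SCZ.pred^[j] (SCZ.idxp x k') = SCZ.idxp x (k' - j) := by
          have h1 : x ∈ SCZ.cube n (SCZ.idxp x k') := hq.1
          have h2 : x ∈ SCZ.cube n (SCZ.idxp x (k' - j)) :=
            (SCZ.idxp_spec hxK hg (k'-j) (by omega)).1
          have h3 : x ∈ SCZ.cube n (SCZ.pred^[j] (SCZ.idxp x k')) :=
            SCZ.subset_predIter (by rw [SCZ.idxp_fst]; omega) (by rw [SCZ.idxp_fst]; omega) h1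
          exact SCZ.same_gen_eq h3 h2
            (by rw [SCZ.predIter_fst, SCZ.idxp_fst, SCZ.idxp_fst])
        rw [hidx]
        intro hH'
        exact Nat.find_min hne (by omega : k' - j < k') ⟨by omega, hH'⟩
      exact hxF.2 (mem_biUnion hmem hq.1)
  -- coverage : A \ G is null
  have hKfin := SCZ.volume_K1_lt_top (n := n)
  have hFfin : volume Fs ≤ volume (K1 n) := measure_mono (hFsA.trans hAK)
  have hcov : volume Fs = 0 := by
    have key : ∀ ε : ℝ≥0∞, ε ≠ 0 → volume Fs ≤ ENNReal.ofReal σ * (volume Fs + ε) := by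
      intro ε hε
      obtain ⟨U, hFU, hUopen, hUvol⟩ :=
        Set.exists_isOpen_lt_add Fs (lt_of_le_of_lt hFfin hKfin).ne hε
      set SU : Set (SCZ.Par n) := {q | k₀ ≤ q.1 ∧ SCZ.cube n q ⊆ U ∧
        (q.1 = k₀ ∨ ¬ (SCZ.cube n (SCZ.pred q) ⊆ U)) ∧
        ∃ x ∈ Fs, x ∉ SCZ.Grid n ∧ x ∈ SCZ.cube n q} with hSUdef
      have hcover : Fs \ SCZ.Grid n ⊆ ⋃ q ∈ SU, SCZ.cube n q := by
        intro x hx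
        obtain ⟨hxF, hxg⟩ := hx
        have hxK : x ∈ K1 n := hAK (hFsA hxF)
        have hxU : x ∈ U := hFU hxF
        have hex2 : ∃ k, k₀ ≤ k ∧ SCZ.cube n (SCZ.idxp x k) ⊆ U :=
          SCZ.cube_small hxK hxg hUopen hxU k₀ hk₀1
        set k1 := Nat.find hex2 with hk1def
        obtain ⟨ha1, ha2⟩ := Nat.find_spec hex2
        refine mem_biUnion ?_ (SCZ.idxp_spec hxK hxg k1 (by omega)).1
        refine ⟨by rw [SCZ.idxp_fst]; omega, ha2, ?_,
          ⟨x, hxF, hxg, (SCZ.idxp_spec hxK hxg k1 (by omega)).1⟩⟩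
        rcases Nat.eq_or_lt_of_le ha1 with heq | hlt2
        · left; rw [SCZ.idxp_fst]; omega
        · right
          intro hcon
          have hpred : SCZ.pred (SCZ.idxp x k1) = SCZ.idxp x (k1 - 1) := by
            have h1 : x ∈ SCZ.cube n (SCZ.pred (SCZ.idxp x k1)) :=
              SCZ.subset_pred (by rw [SCZ.idxp_fst]; omega)
                (SCZ.idxp_spec hxK hxg k1 (by omega)).1
            have h2 : x ∈ SCZ.cube n (SCZ.idxp x (k1-1)) :=
              (SCZ.idxp_spec hxK hxg (k1-1) (by omega)).1
            refine SCZ.same_gen_eq h1 h2 ?_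
            show (SCZ.idxp x k1).1 - 1 = (SCZ.idxp x (k1-1)).1
            rw [SCZ.idxp_fst, SCZ.idxp_fst]
          rw [hpred] at hcon
          exact Nat.find_min hex2 (by omega : k1 - 1 < k1) ⟨by omega, hcon⟩
      have hSUdisj : SU.PairwiseDisjoint (SCZ.cube n) := by
        have key2 : ∀ q ∈ SU, ∀ q' ∈ SU, q'.1 ≤ q.1 → ∀ p, p ∈ SCZ.cube n q →
            p ∈ SCZ.cube n q' → q = q' := by
          intro q hq q' hq' hle p hp hp'
          have h1 : SCZ.pred^[q.1 - q'.1] q = q' :=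
            SCZ.eq_predIter_of_mem hp hp' hle (le_trans hk₀1 hq'.1)
          rcases Nat.eq_or_lt_of_le hle with heq | hlt2
          · rw [show q.1 - q'.1 = 0 by omega] at h1
            simpa using h1
          · exfalso
            rcases hq.2.2.1 with hc | hc
            · have := hq'.1
              omega
            · apply hc
              have hsub : SCZ.cube n (SCZ.pred q) ⊆ SCZ.cube n (SCZ.pred^[q.1 - q'.1] q) := by
                rw [show q.1 - q'.1 = (q.1 - q'.1 - 1) + 1 by omega,
                  Function.iterate_succ_apply]
                refine SCZ.subset_predIter ?_ ?_
                · show q.1 - q'.1 - 1 ≤ (SCZ.pred q).1 - 1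
                  show q.1 - q'.1 - 1 ≤ q.1 - 1 - 1
                  have := hq'.1
                  omega
                · show 1 ≤ (SCZ.pred q).1
                  show 1 ≤ q.1 - 1
                  have := hq'.1
                  omega
              rw [h1] at hsub
              exact hsub.trans hq'.2.1
        intro q hq q' hq' hne
        rw [Function.onFun, Set.disjoint_left]
        intro p hp hp'
        rcases le_total q'.1 q.1 with h | h
        · exact hne (key2 q hq q' hq' h p hp hp')
        · exact hne ((key2 q' hq' q hq h p hp' hp).symm)
      have hSUlow : ∀ q ∈ SU, volume (Fs ∩ SCZ.cube n q) ≤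
          ENNReal.ofReal σ * volume (SCZ.cube n q) := by
        intro q hq
        obtain ⟨hk, hsub, hor, x, hxF, hxg, hxc⟩ := hq
        have hxK : x ∈ K1 n := hAK (hFsA hxF)
        have hid : SCZ.idxp x q.1 = q :=
          SCZ.same_gen_eq (SCZ.idxp_spec hxK hxg q.1 (le_trans hk₀1 hk)).1 hxc
            (SCZ.idxp_fst _ _)
        have hlow : ¬ Hi q := hid ▸ hFlow x hxF hxg q.1 hk
        calc volume (Fs ∩ SCZ.cube n q) ≤ volume (A ∩ SCZ.cube n q) :=
              measure_mono (inter_subset_inter_left _ hFsA)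
          _ ≤ ENNReal.ofReal σ * volume (SCZ.cube n q) := not_lt.mp hlow
      calc volume Fs ≤ volume ((Fs \ SCZ.Grid n) ∪ SCZ.Grid n) := by
            refine measure_mono ?_
            intro y hy
            by_cases h : y ∈ SCZ.Grid n
            · exact Or.inr h
            · exact Or.inl ⟨hy, h⟩
        _ ≤ volume (Fs \ SCZ.Grid n) + volume (SCZ.Grid n) := measure_union_le _ _
        _ = volume (Fs \ SCZ.Grid n) := by rw [SCZ.grid_null, add_zero]
        _ ≤ volume (⋃ q ∈ SU, Fs ∩ SCZ.cube n q) := by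
            refine measure_mono ?_
            intro y hy
            obtain ⟨q, hq, hyc⟩ := mem_iUnion₂.mp (hcover hy)
            exact mem_iUnion₂.mpr ⟨q, hq, hy.1, hyc⟩
        _ ≤ ∑' q : SU, volume (Fs ∩ SCZ.cube n q) :=
            measure_biUnion_le volume (Set.to_countable _) _
        _ ≤ ∑' q : SU, ENNReal.ofReal σ * volume (SCZ.cube n q) :=
            ENNReal.tsum_le_tsum (fun q => hSUlow q q.2)
        _ = ENNReal.ofReal σ * ∑' q : SU, volume (SCZ.cube n q) := ENNReal.tsum_mul_left
        _ = ENNReal.ofReal σ * volume (⋃ q ∈ SU, SCZ.cube n q) := by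
            rw [measure_biUnion (Set.to_countable _) hSUdisj
              (fun q _ => SCZ.measurableSet_cube q)]
        _ ≤ ENNReal.ofReal σ * volume U := by
            refine mul_le_mul_right (measure_mono ?_) _
            exact iUnion₂_subset fun q hq => hq.2.1
        _ ≤ ENNReal.ofReal σ * (volume Fs + ε) := mul_le_mul_right hUvol.le _
    by_contra h0
    have hvfin : volume Fs < ⊤ := lt_of_le_of_lt hFfin hKfin
    set v := volume Fs with hvdef
    set s := ENNReal.ofReal σ with hsdef
    have hs1 : s < 1 := ENNReal.ofReal_lt_one.mpr hσ1
    have hsv : s * v < v := by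
      calc s * v < 1 * v := by
            rw [ENNReal.mul_lt_mul_iff_left h0 hvfin.ne]
            exact hs1
        _ = v := one_mul v
    set δ := v - s * v with hδdef
    have hδpos : 0 < δ := tsub_pos_of_lt hsv
    have hδfin : δ ≠ ⊤ := by
      refine ne_top_of_le_ne_top hvfin.ne ?_
      exact tsub_le_self
    have hkey := key (δ/2) (by
      simp only [ne_eq, ENNReal.div_eq_zero_iff]
      push_neg
      exact ⟨hδpos.ne', by norm_num⟩)
    have hcontr : s * (v + δ/2) < v := by
      have h1 : s * (v + δ/2) ≤ s * v + δ/2 := by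
        rw [mul_add]
        refine add_le_add_right ?_ _
        calc s * (δ/2) ≤ 1 * (δ/2) := mul_le_mul_left hs1.le _
          _ = δ/2 := one_mul _
      have h2 : δ/2 < δ := ENNReal.half_lt_self hδpos.ne' hδfin
      have h3 : s * v + δ = v := by
        rw [hδdef]
        exact add_tsub_cancel_of_le hsv.le
      calc s * (v + δ/2) ≤ s * v + δ/2 := h1
        _ < s * v + δ := by exact ENNReal.add_lt_add_left (by
            refine ne_top_of_le_ne_top hvfin.ne ?_
            calc s * v ≤ 1 * v := mul_le_mul_left hs1.le _
              _ = v := one_mul v) h2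
        _ = v := h3
    exact absurd hkey (not_le.mpr hcontr)
  -- the predecessors of selected cubes and their maximal elements
  set P : Set (SCZ.Par n) := SCZ.pred '' Sel with hPdef
  have hP_gen : ∀ r ∈ P, k₀ ≤ r.1 ∧ 1 ≤ r.1 := by
    rintro r ⟨q, hq, rfl⟩
    have h1 := hq.2.1
    constructor
    · show k₀ ≤ q.1 - 1
      omega
    · show 1 ≤ q.1 - 1
      omega
  have hP_low : ∀ r ∈ P, ¬ Hi r := by
    rintro r ⟨q, hq, rfl⟩
    have h1 := hq.2.2.2 1 (le_refl 1) (by have := hq.2.1; omega)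
    rw [Function.iterate_one] at h1
    exact h1
  set Pm : Set (SCZ.Par n) := {r ∈ P |
    ∀ r', r' ∈ P → r'.1 < r.1 → SCZ.pred^[r.1 - r'.1] r ≠ r'} with hPmdef
  have hmax : ∀ r ∈ P, ∃ s ∈ Pm, SCZ.cube n r ⊆ SCZ.cube n s := by
    have hind : ∀ N, ∀ r ∈ P, r.1 ≤ N → ∃ s ∈ Pm, SCZ.cube n r ⊆ SCZ.cube n s := by
      intro N
      induction N with
      | zero =>
        intro r hr h0
        exact absurd ((hP_gen r hr).2) (by omega)
      | succ N ih =>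
        intro r hr hN
        by_cases hPm : r ∈ Pm
        · exact ⟨r, hPm, subset_rfl⟩
        · simp only [hPmdef, mem_setOf_eq, not_and, not_forall] at hPm
          obtain ⟨r', hr', hlt, heq⟩ := hPm hr
          push_neg at heq
          have hsub : SCZ.cube n r ⊆ SCZ.cube n r' := by
            rw [← heq]
            refine SCZ.subset_predIter ?_ ((hP_gen r hr).2)
            have := (hP_gen r' hr').2
            omega
          obtain ⟨s, hs, hsub2⟩ := ih r' hr' (by omega)
          exact ⟨s, hs, hsub.trans hsub2⟩
    intro r hr
    exact hind r.1 r hr (le_refl _)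
  have hPm_disj : Pm.PairwiseDisjoint (SCZ.cube n) := by
    have key2 : ∀ r ∈ Pm, ∀ r' ∈ Pm, r'.1 ≤ r.1 → ∀ p, p ∈ SCZ.cube n r →
        p ∈ SCZ.cube n r' → r = r' := by
      intro r hr r' hr' hle p hp hp'
      have h1 : SCZ.pred^[r.1 - r'.1] r = r' :=
        SCZ.eq_predIter_of_mem hp hp' hle ((hP_gen r' hr'.1).2)
      rcases Nat.eq_or_lt_of_le hle with heq | hlt2
      · rw [show r.1 - r'.1 = 0 by omega] at h1
        simpa using h1
      · exact absurd h1 (hr.2 r' hr'.1 hlt2)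
    intro r hr r' hr' hne
    rw [Function.onFun, Set.disjoint_left]
    intro p hp hp'
    rcases le_total r'.1 r.1 with h | h
    · exact hne (key2 r hr r' hr' h p hp hp')
    · exact hne ((key2 r' hr' r hr h p hp' hp).symm)
  -- stacks of maximal predecessors are in B
  have hstacks : ∀ r ∈ Pm,
      ((univ.pi fun i => Ioo ((r.2.1 i : ℝ) * SCZ.sLen r.1) (((r.2.1 i : ℝ)+1) * SCZ.sLen r.1))
        ×ˢ Ioc ((r.2.2:ℝ) * SCZ.tLen r.1 + SCZ.tLen r.1)
          ((r.2.2:ℝ) * SCZ.tLen r.1 + SCZ.tLen r.1 + m * SCZ.tLen r.1)) ⊆ B := by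
    rintro r ⟨⟨q, hq, rfl⟩, -⟩
    have hq1 := hq.2.1
    have hk2 : 2 ≤ q.1 := by omega
    have h9 : m ≤ 9 * 4 ^ (q.1 - 1) := by
      have hpow : (4:ℕ) ^ (k₀ - 1) ≤ 4 ^ (q.1 - 1) :=
        Nat.pow_le_pow_right (by norm_num) (by omega)
      omega
    have hB := hCZ' q hq.1 (SCZ.stacked_subset_bigQ hq.1 h9) hq.2.2.1
    rw [SCZ.stacked_eq_prod hk2] at hB
    exact hB
  -- final computation
  have hAG : volume A ≤ volume (A ∩ G) := by
    calc volume A ≤ volume (A ∩ G) + volume (A \ G) := measure_le_inter_add_diff _ _ _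
      _ = volume (A ∩ G) := by rw [← hFsdef, hcov, add_zero]
  have hsub2 : A ∩ G ⊆ ⋃ r ∈ Pm, SCZ.cube n r := by
    intro p hp
    obtain ⟨-, hpG⟩ := hp
    obtain ⟨q, hq, hpc⟩ := mem_iUnion₂.mp hpG
    have h1 : p ∈ SCZ.cube n (SCZ.pred q) :=
      SCZ.subset_pred (by have := hq.2.1; omega) hpc
    obtain ⟨s, hs, hsub⟩ := hmax (SCZ.pred q) ⟨q, hq, rfl⟩
    exact mem_iUnion₂.mpr ⟨s, hs, hsub h1⟩
  have hm0 : (0:ℝ) < m := by exact_mod_cast hm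
  calc volume A ≤ volume (A ∩ G) := hAG
    _ ≤ volume (⋃ r ∈ Pm, A ∩ SCZ.cube n r) := by
        refine measure_mono ?_
        intro p hp
        obtain ⟨r, hr, hpc⟩ := mem_iUnion₂.mp (hsub2 hp)
        exact mem_iUnion₂.mpr ⟨r, hr, hp.1, hpc⟩
    _ ≤ ∑' r : Pm, volume (A ∩ SCZ.cube n r) :=
        measure_biUnion_le volume (Set.to_countable _) _
    _ ≤ ∑' r : Pm, ENNReal.ofReal σ * volume (SCZ.cube n r) :=
        ENNReal.tsum_le_tsum (fun r => not_lt.mp (hP_low r r.2.1))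
    _ = ENNReal.ofReal σ * ∑' r : Pm, volume (SCZ.cube n r) := ENNReal.tsum_mul_left
    _ ≤ ENNReal.ofReal σ * ((1 + ((m:ℝ≥0∞))⁻¹) * volume B) := by
        refine mul_le_mul_right ?_ _
        have hstk := SCZ.stacking (n := n) (ι := ↥Pm) hm
          (V := fun r => univ.pi fun i => Ioo ((r.val.2.1 i : ℝ) * SCZ.sLen r.val.1)
            (((r.val.2.1 i : ℝ)+1) * SCZ.sLen r.val.1))
          (fun r => MeasurableSet.univ_pi fun i => measurableSet_Ioo)
          (τ := fun r => (r.val.2.2:ℝ) * SCZ.tLen r.val.1)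
          (ℓ := fun r => SCZ.tLen r.val.1)
          (fun r => SCZ.tLen_pos _)
          ?_ (B := B) (fun r => hstacks r.val r.2)
        · calc ∑' r : Pm, volume (SCZ.cube n r)
              = ∑' r : Pm, volume
                ((univ.pi fun i => Ioo ((r.val.2.1 i : ℝ) * SCZ.sLen r.val.1)
                  (((r.val.2.1 i : ℝ)+1) * SCZ.sLen r.val.1)) ×ˢ
                  Ioc ((r.val.2.2:ℝ) * SCZ.tLen r.val.1)
                    ((r.val.2.2:ℝ) * SCZ.tLen r.val.1 + SCZ.tLen r.val.1)) := by
                refine tsum_congr (fun r => ?_)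
                rw [← SCZ.cube_eq_prod']
            _ ≤ (1 + ((m:ℝ≥0∞))⁻¹) * volume B := hstk
        · intro r s hrs
          have hd := hPm_disj r.2 s.2 (fun h => hrs (Subtype.coe_injective h))
          rw [Function.onFun, Set.disjoint_iff_inter_eq_empty] at hd
          rw [SCZ.cube_eq_prod', SCZ.cube_eq_prod'] at hd
          exact hd
    _ = ENNReal.ofReal (σ * ((m:ℝ)+1) / m) * volume B := by
        rw [← mul_assoc]
        congr 1
        have h1 : (1 + ((m:ℝ≥0∞))⁻¹) = ENNReal.ofReal (((m:ℝ)+1)/m) := by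
          rw [show ((m:ℝ)+1)/m = 1 + 1/(m:ℝ) by field_simp]
          rw [ENNReal.ofReal_add (by norm_num) (by positivity), ENNReal.ofReal_one]
          congr 1
          rw [one_div, ENNReal.ofReal_inv_of_pos hm0, ENNReal.ofReal_natCast]
        rw [h1, ← ENNReal.ofReal_mul hσ0.le]
        congr 1
        rw [mul_div_assoc]
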